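/- arXiv:1812.06555 — 3 statements merged into one kernel-verified Lean document; each statement's English description precedes it below -/
import Mathlib

section
/- Let n ≥ 5 and n/(n-4) < p < (n+4)/(n-4). Define K₀ = (8/(p-1)⁴)[(n-2)(n-4)(p-1)³ + 2(n²-10n+20)(p-1)² − 16(n-4)(p-1) + 32], K₁ = −(2/(p-1)³)[(n-2)(n-4)(p-1)³ + 4(n²-10n+20)(p-1)² − 48(n-4)(p-1) + 128], and K₃ = (2/(p-1))[(n-4)(p-1) − 8]. Then K₀ > 0, K₁ > 0, and K₃ < 0. -/
/-!
Put `t = p - 1`. The range of `p` says exactly `4 < (n - 4) t < 8`. The bracket in `K₀` factors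
as `(t + 2) ((n - 2) t - 4) ((n - 4) t - 4)` and the bracket in `K₁` as
`(8 - (n - 4) t) (16 - 4 (n - 4) t - (n - 2) t²)`, so each sign is read off the factors.
-/

section EmdenFowlerCoefficients

variable {n p t : ℝ}

lemma four_lt_mul_of_div_lt (hn : 4 < n) (hp : n / (n - 4) < p) : 4 < (n - 4) * (p - 1) := by
  have := (div_lt_iff₀ (sub_pos.mpr hn)).mp hp
  linarith

lemma mul_lt_eight_of_lt_div (hn : 4 < n) (hp : p < (n + 4) / (n - 4)) :
    (n - 4) * (p - 1) < 8 := by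
  have := (lt_div_iff₀ (sub_pos.mpr hn)).mp hp
  linarith

lemma pos_of_four_lt_mul (hn : 4 < n) (ht : 4 < (n - 4) * t) : 0 < t :=
  pos_of_mul_pos_right (by linarith) (sub_pos.mpr hn).le

lemma emdenFowler_K₀_bracket_pos (hn : 4 < n) (ht : 4 < (n - 4) * t) :
    0 < (n - 2) * (n - 4) * t ^ 3 + 2 * (n ^ 2 - 10 * n + 20) * t ^ 2
      - 16 * (n - 4) * t + 32 := by
  have factor : (n - 2) * (n - 4) * t ^ 3 + 2 * (n ^ 2 - 10 * n + 20) * t ^ 2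
      - 16 * (n - 4) * t + 32 = (t + 2) * ((n - 2) * t - 4) * ((n - 4) * t - 4) := by ring
  have ht0 := pos_of_four_lt_mul hn ht
  rw [factor]
  exact mul_pos (mul_pos (by linarith) (by linarith)) (by linarith)

lemma emdenFowler_K₁_bracket_neg (hn : 4 < n) (ht : 4 < (n - 4) * t) (ht' : (n - 4) * t < 8) :
    (n - 2) * (n - 4) * t ^ 3 + 4 * (n ^ 2 - 10 * n + 20) * t ^ 2
      - 48 * (n - 4) * t + 128 < 0 := by
  have factor : (n - 2) * (n - 4) * t ^ 3 + 4 * (n ^ 2 - 10 * n + 20) * t ^ 2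
      - 48 * (n - 4) * t + 128 = (8 - (n - 4) * t) * (16 - 4 * (n - 4) * t - (n - 2) * t ^ 2) := by
    ring
  have quadratic_pos : 0 < (n - 2) * t ^ 2 :=
    mul_pos (by linarith) (pow_pos (pos_of_four_lt_mul hn ht) 2)
  rw [factor]
  exact mul_neg_of_pos_of_neg (by linarith) (by linarith)

end EmdenFowlerCoefficients

/-- Signs of the coefficients `K₀`, `K₁`, `K₃` of the Emden–Fowler
transformed equation: for `n ≥ 5` and `n/(n-4) < p < (n+4)/(n-4)` one has `K₀ > 0`, `K₁ > 0`,
`K₃ < 0`. -/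
theorem stmt_8 (n : ℕ) (hn : 5 ≤ n) (p : ℝ)
    (hp1 : (n : ℝ) / ((n : ℝ) - 4) < p) (hp2 : p < ((n : ℝ) + 4) / ((n : ℝ) - 4)) :
    0 < 8 / (p - 1) ^ 4 *
        (((n : ℝ) - 2) * ((n : ℝ) - 4) * (p - 1) ^ 3
          + 2 * ((n : ℝ) ^ 2 - 10 * (n : ℝ) + 20) * (p - 1) ^ 2
          - 16 * ((n : ℝ) - 4) * (p - 1) + 32) ∧
    0 < -(2 / (p - 1) ^ 3) *
        (((n : ℝ) - 2) * ((n : ℝ) - 4) * (p - 1) ^ 3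
          + 4 * ((n : ℝ) ^ 2 - 10 * (n : ℝ) + 20) * (p - 1) ^ 2
          - 48 * ((n : ℝ) - 4) * (p - 1) + 128) ∧
    2 / (p - 1) * (((n : ℝ) - 4) * (p - 1) - 8) < 0 := by
  have hn4 : (4 : ℝ) < n := by exact_mod_cast hn
  have lower := four_lt_mul_of_div_lt hn4 hp1
  have upper := mul_lt_eight_of_lt_div hn4 hp2
  have ht := pos_of_four_lt_mul hn4 lower
  refine ⟨mul_pos (by positivity) (emdenFowler_K₀_bracket_pos hn4 lower), ?_,
    mul_neg_of_pos_of_neg (by positivity) (by linarith)⟩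
  rw [neg_mul, neg_pos]
  exact mul_neg_of_pos_of_neg (by positivity) (emdenFowler_K₁_bracket_neg hn4 lower upper)
end

section
/- Let n ≥ 5 be an integer and define f(s) = (n-2)(n-4)s³ + 4(n²-10n+20)s² − 48(n-4)s + 128 for real s. Then f(8/(n-4)) = 0 and f(s) < 0 for every s with 4/(n-4) < s < 8/(n-4). -/
/-- The cubic `f(s) = (n-2)(n-4)s³ + 4(n²-10n+20)s² − 48(n-4)s + 128`
satisfies `f(8/(n-4)) = 0` and `f(s) < 0` for `4/(n-4) < s < 8/(n-4)`, for every integer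
`n ≥ 5`. -/
theorem stmt_9 (n : ℕ) (hn : 5 ≤ n)
    (f : ℝ → ℝ)
    (hf : ∀ s : ℝ, f s = ((n : ℝ) - 2) * ((n : ℝ) - 4) * s ^ 3
      + 4 * ((n : ℝ) ^ 2 - 10 * (n : ℝ) + 20) * s ^ 2
      - 48 * ((n : ℝ) - 4) * s + 128) :
    f (8 / ((n : ℝ) - 4)) = 0 ∧
    ∀ s : ℝ, 4 / ((n : ℝ) - 4) < s → s < 8 / ((n : ℝ) - 4) → f s < 0 := by
  have hn5 : (5:ℝ) ≤ (n:ℝ) := by exact_mod_cast hn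
  have hc0 : (0:ℝ) < (n:ℝ) - 4 := by linarith
  constructor
  · rw [hf]
    have hne : ((n:ℝ) - 4) ≠ 0 := ne_of_gt hc0
    field_simp
    ring
  · intro s h1 h2
    rw [hf]
    have h1' : 4 < ((n:ℝ) - 4) * s := by
      rwa [div_lt_iff₀ hc0, mul_comm] at h1
    have h2' : ((n:ℝ) - 4) * s < 8 := by
      rwa [lt_div_iff₀ hc0, mul_comm] at h2
    have hs : 0 < s := lt_trans (by positivity) h1
    have key : ((n : ℝ) - 2) * ((n : ℝ) - 4) * s ^ 3
      + 4 * ((n : ℝ) ^ 2 - 10 * (n : ℝ) + 20) * s ^ 2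
      - 48 * ((n : ℝ) - 4) * s + 128
      = (((n:ℝ) - 4) * s - 8) * (((n:ℝ) - 2) * s ^ 2 + 4 * (((n:ℝ) - 4) * s) - 16) := by
      ring
    rw [key]
    have hq : 0 < ((n:ℝ) - 2) * s ^ 2 + 4 * (((n:ℝ) - 4) * s) - 16 := by
      have : 0 < ((n:ℝ) - 2) * s ^ 2 := mul_pos (by linarith) (by positivity)
      linarith
    exact mul_neg_of_neg_of_pos (by linarith) hq
end

section
/- Let n ≥ 5 and n/(n-4) < p < (n+4)/(n-4), and set C_{p,n} = K₀(p,n)^{1/(p-1)}. Then the function u(x) = C_{p,n} |x|^{-4/(p-1)} is a positive C⁴ function on ℝⁿ\{0} satisfying Δ²u(x) = u(x)^p for all x ∈ ℝⁿ\{0}. -/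
open MeasureTheory Metric Filter

/-- The Euclidean Laplacian `Δu` of `u : ℝⁿ → ℝ`, computed as the trace of the second
derivative: `Δu(x) = ∑ i, ∂²u/∂xᵢ²(x)`. -/
noncomputable def lap {n : ℕ} (u : EuclideanSpace ℝ (Fin n) → ℝ) :
    EuclideanSpace ℝ (Fin n) → ℝ :=
  fun x => ∑ i : Fin n,
    iteratedFDeriv ℝ 2 u x ![EuclideanSpace.single i 1, EuclideanSpace.single i 1]

/-- The biharmonic operator `Δ²u = Δ(Δu)`. -/
noncomputable def bilap {n : ℕ} (u : EuclideanSpace ℝ (Fin n) → ℝ) :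
    EuclideanSpace ℝ (Fin n) → ℝ :=
  lap (lap u)

/-- The constant `K₀(p,n)`. -/
noncomputable def K0 (n : ℕ) (p : ℝ) : ℝ :=
  8 / (p - 1) ^ 4 *
    (((n : ℝ) - 2) * ((n : ℝ) - 4) * (p - 1) ^ 3
      + 2 * ((n : ℝ) ^ 2 - 10 * (n : ℝ) + 20) * (p - 1) ^ 2
      - 16 * ((n : ℝ) - 4) * (p - 1) + 32)

/-!
For `x ≠ 0`, `Δ (c ‖x‖ ^ s) = c s (s + n - 2) ‖x‖ ^ (s - 2)`, so applying this twice gives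
`Δ² (c ‖x‖ ^ s) = c s (s + n - 2) (s - 2) (s + n - 4) ‖x‖ ^ (s - 4)`. For `s = -4 / (p - 1)` the
product of the four factors is exactly `K₀(p, n)`, positive when `n / (n - 4) < p` since then
`4 - n < s < 0`, and `s - 4 = s p`; so `C = K₀ ^ (1 / (p - 1))` solves `C K₀ = C ^ p`, which is
`Δ² u = u ^ p`.
-/

open Real

theorem Real.sq_rpow_div_two {t : ℝ} (ht : 0 ≤ t) (s : ℝ) : (t ^ 2) ^ (s / 2) = t ^ s := by
  rw [← rpow_natCast_mul ht]
  congr 1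
  push_cast
  ring

section NormRpow

variable {E : Type*} [NormedAddCommGroup E] [InnerProductSpace ℝ E] {x : E}

theorem hasFDerivAt_norm_rpow_of_ne_zero (hx : x ≠ 0) (s : ℝ) :
    HasFDerivAt (fun y : E ↦ ‖y‖ ^ s) ((s * ‖x‖ ^ (s - 2)) • innerSL ℝ x) x := by
  have h := ((hasStrictFDerivAt_norm_sq x).rpow_const (p := s / 2) (by simp [hx])).hasFDerivAt
  simp only [sq_rpow_div_two (norm_nonneg _)] at h
  convert h using 1
  rw [← sq_rpow_div_two (norm_nonneg x) (s - 2), ← Nat.cast_smul_eq_nsmul ℝ, smul_smul]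
  ring_nf

theorem contDiffAt_norm_rpow_of_ne_zero (hx : x ≠ 0) (s : ℝ) {m : WithTop ℕ∞} :
    ContDiffAt ℝ m (fun y : E ↦ ‖y‖ ^ s) x :=
  (contDiffAt_rpow_const_of_ne (norm_ne_zero_iff.mpr hx)).comp x (contDiffAt_norm ℝ hx)

theorem hasFDerivAt_const_mul_norm_rpow (hx : x ≠ 0) (c s : ℝ) :
    HasFDerivAt (fun y : E ↦ c * ‖y‖ ^ s) ((c * s * ‖x‖ ^ (s - 2)) • innerSL ℝ x) x := by
  simpa only [smul_smul, mul_assoc] using (hasFDerivAt_norm_rpow_of_ne_zero hx s).const_mul c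

theorem iteratedFDeriv_two_const_mul_norm_rpow (hx : x ≠ 0) (c s : ℝ) (v w : E) :
    iteratedFDeriv ℝ 2 (fun y : E ↦ c * ‖y‖ ^ s) x ![v, w] =
      c * s * ((s - 2) * ‖x‖ ^ (s - 4) * inner ℝ x v * inner ℝ x w
        + ‖x‖ ^ (s - 2) * inner ℝ v w) := by
  have hD : fderiv ℝ (fun y : E ↦ c * ‖y‖ ^ s) =ᶠ[nhds x]
      fun y ↦ (c * s * ‖y‖ ^ (s - 2)) • innerSL ℝ y := by
    filter_upwards [isOpen_compl_singleton.mem_nhds hx] with y hy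
    exact (hasFDerivAt_const_mul_norm_rpow hy c s).fderiv
  have hD2 := ((hasFDerivAt_const_mul_norm_rpow hx (c * s) (s - 2)).smul
    (innerSL ℝ : E →L[ℝ] E →L[ℝ] ℝ).hasFDerivAt).congr_of_eventuallyEq hD
  rw [iteratedFDeriv_two_apply, hD2.fderiv]
  simp only [Fin.isValue, Matrix.cons_val_zero, Matrix.cons_val_one, Matrix.cons_val_fin_one,
    add_apply, smul_apply, ContinuousLinearMap.smulRight_apply, smul_eq_mul]
  rw [innerSL_apply_apply, innerSL_apply_apply, innerSL_apply_apply, show s - 2 - 2 = s - 4 by ring]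
  ring

end NormRpow

def biharmonicRadialFactor (n : ℕ) (s : ℝ) : ℝ :=
  s * (s + n - 2) * (s - 2) * (s + n - 4)

theorem biharmonicRadialFactor_pos {n : ℕ} {s : ℝ} (hs₀ : 4 - n < s) (hs : s < 0) :
    0 < biharmonicRadialFactor n s := by
  have h₁ : 0 < s * (s - 2) := mul_pos_of_neg_of_neg hs (by linarith)
  have h₂ : 0 < (s + n - 2) * (s + n - 4) := mul_pos (by linarith) (by linarith)
  calc 0 < s * (s - 2) * ((s + n - 2) * (s + n - 4)) := mul_pos h₁ h₂
    _ = _ := by rw [biharmonicRadialFactor]; ring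

section Laplacian

variable {n : ℕ}

theorem Filter.EventuallyEq.lap_eq {f g : EuclideanSpace ℝ (Fin n) → ℝ}
    {x : EuclideanSpace ℝ (Fin n)} (h : f =ᶠ[nhds x] g) : lap f x = lap g x := by
  simp only [lap, iteratedFDeriv_two_apply, h.fderiv.fderiv_eq]

theorem lap_const_mul_norm_rpow {x : EuclideanSpace ℝ (Fin n)} (hx : x ≠ 0) (c s : ℝ) :
    lap (fun y ↦ c * ‖y‖ ^ s) x = c * s * (s + n - 2) * ‖x‖ ^ (s - 2) := by
  have hsum : ∑ i, (s - 2) * ‖x‖ ^ (s - 4) * x i * x i = (s - 2) * ‖x‖ ^ (s - 2) := by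
    simp only [mul_assoc, ← Finset.mul_sum, ← sq, ← EuclideanSpace.real_norm_sq_eq]
    rw [← rpow_natCast, ← rpow_add (norm_pos_iff.mpr hx)]
    ring_nf
  simp only [lap, iteratedFDeriv_two_const_mul_norm_rpow hx, EuclideanSpace.inner_single_right,
    ringHom_apply, PiLp.single_eq_same, one_mul, mul_one, ← Finset.mul_sum, Finset.sum_add_distrib,
    Finset.sum_const, Finset.card_univ, Fintype.card_fin, nsmul_eq_mul]
  rw [hsum]
  ring

theorem bilap_const_mul_norm_rpow {x : EuclideanSpace ℝ (Fin n)} (hx : x ≠ 0) (c s : ℝ) :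
    bilap (fun y ↦ c * ‖y‖ ^ s) x = c * biharmonicRadialFactor n s * ‖x‖ ^ (s - 4) := by
  have hlap : lap (fun y ↦ c * ‖y‖ ^ s) =ᶠ[nhds x]
      fun y ↦ c * s * (s + n - 2) * ‖y‖ ^ (s - 2) := by
    filter_upwards [isOpen_compl_singleton.mem_nhds hx] with y hy
    exact lap_const_mul_norm_rpow hy c s
  rw [bilap, hlap.lap_eq, lap_const_mul_norm_rpow hx, show s - 2 - 2 = s - 4 by ring,
    biharmonicRadialFactor]
  ring

end Laplacian

theorem K0_eq_biharmonicRadialFactor (n : ℕ) {p : ℝ} (hp : p ≠ 1) :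
    K0 n p = biharmonicRadialFactor n (-(4 / (p - 1))) := by
  have : p - 1 ≠ 0 := sub_ne_zero.mpr hp
  rw [K0, biharmonicRadialFactor]
  field_simp
  ring

theorem one_lt_and_four_div_sub_one_lt {n p : ℝ} (hn : 4 < n) (hp : n / (n - 4) < p) :
    1 < p ∧ 4 / (p - 1) < n - 4 := by
  have hn₄ : 0 < n - 4 := by linarith
  have hp₁ : 1 < p := lt_trans ((one_lt_div hn₄).mpr (by linarith)) hp
  refine ⟨hp₁, (div_lt_iff₀ (by linarith)).mpr ?_⟩
  have := (div_lt_iff₀ hn₄).mp hp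
  nlinarith

theorem rpow_one_div_sub_one_mul_rpow_rpow {K t p : ℝ} (hK : 0 < K) (ht : 0 ≤ t) (hp : p ≠ 1)
    (a : ℝ) :
    (K ^ (1 / (p - 1)) * t ^ (-(a / (p - 1)))) ^ p =
      K ^ (1 / (p - 1)) * K * t ^ (-(a / (p - 1)) - a) := by
  have : p - 1 ≠ 0 := sub_ne_zero.mpr hp
  rw [mul_rpow (rpow_nonneg hK.le _) (rpow_nonneg ht _), ← rpow_mul hK.le, ← rpow_mul ht,
    ← rpow_add_one hK.ne']
  congr 2 <;> field_simp <;> ring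

theorem stmt_14_general (n : ℕ) (hn : 5 ≤ n) (p : ℝ)
    (hp1 : (n : ℝ) / ((n : ℝ) - 4) < p)
    (u : EuclideanSpace ℝ (Fin n) → ℝ)
    (hu : ∀ x : EuclideanSpace ℝ (Fin n),
      u x = K0 n p ^ ((1 : ℝ) / (p - 1)) * ‖x‖ ^ (-((4 : ℝ) / (p - 1)))) :
    (∀ x : EuclideanSpace ℝ (Fin n), x ≠ 0 → 0 < u x) ∧
    ContDiffOn ℝ 4 u {(0 : EuclideanSpace ℝ (Fin n))}ᶜ ∧
    ∀ x : EuclideanSpace ℝ (Fin n), x ≠ 0 → bilap u x = u x ^ p := by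
  obtain ⟨hp, hs⟩ := one_lt_and_four_div_sub_one_lt (by exact_mod_cast hn) hp1
  have hK : 0 < K0 n p := by
    rw [K0_eq_biharmonicRadialFactor n hp.ne']
    exact biharmonicRadialFactor_pos (by linarith) (neg_neg_of_pos (by bound))
  obtain rfl : u = fun y ↦ K0 n p ^ (1 / (p - 1)) * ‖y‖ ^ (-(4 / (p - 1))) := funext hu
  refine ⟨fun x hx ↦ by positivity, fun x hx ↦ ?_, fun x hx ↦ ?_⟩
  · exact (contDiffAt_const.mul (contDiffAt_norm_rpow_of_ne_zero hx _)).contDiffWithinAt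
  · rw [bilap_const_mul_norm_rpow hx, ← K0_eq_biharmonicRadialFactor n hp.ne',
      rpow_one_div_sub_one_mul_rpow_rpow hK (norm_nonneg x) hp.ne']

/-- The function `u(x) = K₀(p,n)^{1/(p-1)} |x|^{-4/(p-1)}` is a positive
`C⁴` solution of `Δ²u = u^p` on `ℝⁿ \ {0}`. -/
theorem stmt_14 (n : ℕ) (hn : 5 ≤ n) (p : ℝ)
    (hp1 : (n : ℝ) / ((n : ℝ) - 4) < p) (hp2 : p < ((n : ℝ) + 4) / ((n : ℝ) - 4))
    (u : EuclideanSpace ℝ (Fin n) → ℝ)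
    (hu : ∀ x : EuclideanSpace ℝ (Fin n),
      u x = K0 n p ^ ((1 : ℝ) / (p - 1)) * ‖x‖ ^ (-((4 : ℝ) / (p - 1)))) :
    (∀ x : EuclideanSpace ℝ (Fin n), x ≠ 0 → 0 < u x) ∧
    ContDiffOn ℝ 4 u {(0 : EuclideanSpace ℝ (Fin n))}ᶜ ∧
    ∀ x : EuclideanSpace ℝ (Fin n), x ≠ 0 → bilap u x = u x ^ p :=
  stmt_14_general n hn p hp1 u hu
end
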